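/- Let m ≥ 1 and θ_1, …, θ_m > 0 with θ := Σ_{i=1}^m θ_i, and let (P_1, …, P_m) have the Dirichlet(θ_1, …, θ_m) distribution, i.e. P_i = γ_i/(γ_1 + ⋯ + γ_m) for independent random variables γ_i with Gamma(θ_i) distribution. Then for all fixed nonnegative reals x_1, …, x_m and all λ ≥ 0: E[(1 + λ·Σ_{i=1}^m x_i·P_i)^{-θ}] = Π_{i=1}^m (1 + λ·x_i)^{-θ_i}; moreover, for γ a Gamma(θ) random variable independent of (P_1, …, P_m), E[exp(-λ·γ·Σ_{i=1}^m x_i·P_i)] equals the same product. -/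

import Mathlib

/-!
Write `Y = (γ₁, …, γₘ)`, `S = ∑ γᵢ` and `M = ∑ xᵢ Pᵢ`, a scale-invariant function of `Y`.
Scaling `Y` by `(1 + u)⁻¹` turns each `Gamma(θᵢ, 1)` into `Gamma(θᵢ, 1 + u)`, which is also the
exponential tilt of `Gamma(θᵢ, 1)` by `e^{-u γᵢ}`; hence `E[e^{-uS}; Y ∈ B] = (1 + u)^{-θ} P(Y ∈ B)`
for every scale-invariant event `B`. Applying this on the level sets of the dyadic approximations
`⌊2ⁿM⌋/2ⁿ` and letting `n → ∞` gives `E[(1 + M)^{-θ}] = E[e^{-SM}]`: `S` behaves like a `Gamma(θ)`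
variable independent of `P`. Since `SM = ∑ xᵢ γᵢ`, independence of the `γᵢ` factorizes the right
side into `∏ (1 + xᵢ)^{-θᵢ}`. For the second identity, independence of `γ` and `P` and the Laplace
transform of `Gamma(θ)` give `E[e^{-γM}] = E[(1 + M)^{-θ}]` directly.
-/

open MeasureTheory ProbabilityTheory

open Real Filter Topology
open scoped ENNReal

namespace ProbabilityTheory

section Gamma

variable {a r : ℝ}

instance sigmaFinite_gammaMeasure : SigmaFinite (gammaMeasure a r) := by
  unfold gammaMeasure gammaPDF
  infer_instance

lemma measurable_gammaPDF : Measurable (gammaPDF a r) := by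
  unfold gammaPDF; fun_prop

lemma ae_pos_gammaMeasure : ∀ᵐ x ∂gammaMeasure a r, 0 < x := by
  simp_rw [ae_iff, not_lt]
  change gammaMeasure a r (Set.Iic 0) = 0
  rw [gammaMeasure, withDensity_apply _ measurableSet_Iic, setLIntegral_congr Iio_ae_eq_Iic.symm]
  exact lintegral_gammaPDF_of_nonpos le_rfl

lemma withDensity_exp_gammaMeasure {u : ℝ} (hu : -1 < u) :
    (gammaMeasure a 1).withDensity (fun t => ENNReal.ofReal ((1 + u) ^ a * exp (-(u * t)))) =
      gammaMeasure a (1 + u) := by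
  rw [gammaMeasure, gammaMeasure, ← withDensity_mul _ measurable_gammaPDF (by fun_prop)]
  congr 1
  funext t
  simp only [Pi.mul_apply, gammaPDF_eq]
  split_ifs
  · have hexp : exp (-((1 + u) * t)) = exp (-(1 * t)) * exp (-(u * t)) := by
      rw [← exp_add]; ring_nf
    rw [← ENNReal.ofReal_mul' (mul_pos (rpow_pos_of_pos (by linarith) _) (exp_pos _)).le,
      one_rpow, hexp]
    ring_nf
  · simp

lemma gammaPDF_eq_ofReal_mul_gammaPDF (hr : 0 < r) {c : ℝ} (hc : 0 < c) (t : ℝ) :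
    gammaPDF a r t = ENNReal.ofReal c * gammaPDF a (r / c) (c * t) := by
  rw [gammaPDF_eq, gammaPDF_eq, ← ENNReal.ofReal_mul hc.le]
  congr 1
  by_cases ht : 0 ≤ t
  · have hrt : r / c * (c * t) = r * t := by field_simp
    rw [if_pos ht, if_pos (by positivity), mul_rpow hc.le ht, hrt, div_rpow hr.le hc.le,
      rpow_sub hc, rpow_one]
    have := rpow_pos_of_pos hc a
    field_simp
  · rw [if_neg ht, if_neg (by nlinarith), mul_zero]

lemma map_const_mul_gammaMeasure (hr : 0 < r) {c : ℝ} (hc : 0 < c) :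
    (gammaMeasure a r).map (c * ·) = gammaMeasure a (r / c) := by
  ext s hs
  have hs' : MeasurableSet ((c * ·) ⁻¹' s) := measurable_const_mul c hs
  have hf : Measurable (s.indicator (gammaPDF a (r / c))) := measurable_gammaPDF.indicator hs
  rw [Measure.map_apply (measurable_const_mul c) hs, gammaMeasure, gammaMeasure,
    withDensity_apply _ hs', withDensity_apply _ hs, ← lintegral_indicator hs',
    ← lintegral_indicator hs]
  calc ∫⁻ t, ((c * ·) ⁻¹' s).indicator (gammaPDF a r) t
      = ∫⁻ t, ENNReal.ofReal c * s.indicator (gammaPDF a (r / c)) (c * t) := by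
        congr 1
        funext t
        by_cases ht : c * t ∈ s
        · rw [Set.indicator_of_mem (show t ∈ (c * ·) ⁻¹' s from ht), Set.indicator_of_mem ht,
            gammaPDF_eq_ofReal_mul_gammaPDF hr hc]
        · rw [Set.indicator_of_notMem (show t ∉ (c * ·) ⁻¹' s from ht),
            Set.indicator_of_notMem ht, mul_zero]
    _ = ENNReal.ofReal c * ∫⁻ t, s.indicator (gammaPDF a (r / c)) t ∂volume.map (c * ·) := by
        rw [lintegral_map hf (measurable_const_mul c)]
        exact lintegral_const_mul _ (hf.comp (measurable_const_mul c))
    _ = ∫⁻ t, s.indicator (gammaPDF a (r / c)) t := by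
        rw [Real.map_volume_mul_left hc.ne', lintegral_smul_measure, smul_eq_mul, ← mul_assoc,
          abs_of_pos (inv_pos.mpr hc), ← ENNReal.ofReal_mul hc.le, mul_inv_cancel₀ hc.ne',
          ENNReal.ofReal_one, one_mul]

lemma lintegral_exp_neg_mul_gammaMeasure (ha : 0 < a) {u : ℝ} (hu : -1 < u) :
    ∫⁻ t, ENNReal.ofReal (exp (-(u * t))) ∂gammaMeasure a 1 =
      ENNReal.ofReal ((1 + u) ^ (-a)) := by
  have h1u : 0 < 1 + u := by linarith
  have hprob := (isProbabilityMeasure_gammaMeasure ha h1u).measure_univ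
  rw [← withDensity_exp_gammaMeasure hu, withDensity_apply _ MeasurableSet.univ,
    Measure.restrict_univ] at hprob
  simp_rw [ENNReal.ofReal_mul (rpow_nonneg h1u.le _)] at hprob
  rw [lintegral_const_mul _ (by fun_prop)] at hprob
  rw [rpow_neg h1u.le, ENNReal.ofReal_inv_of_pos (rpow_pos_of_pos h1u _)]
  exact ENNReal.eq_inv_of_mul_eq_one_left (by rwa [mul_comm])

end Gamma

end ProbabilityTheory

namespace MeasureTheory

section Pi

variable {ι : Type*} [Fintype ι] {α : ι → Type*} [∀ i, MeasurableSpace (α i)]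
  {μ : (i : ι) → Measure (α i)} [∀ i, IsProbabilityMeasure (μ i)]

lemma lintegral_pi_prod {f : (i : ι) → α i → ℝ≥0∞} (hf : ∀ i, Measurable (f i)) :
    ∫⁻ y, ∏ i, f i (y i) ∂Measure.pi μ = ∏ i, ∫⁻ t, f i t ∂μ i := by
  refine (lintegral_prod_eq_prod_lintegral_of_indepFun Finset.univ
    (fun i (y : (i : ι) → α i) => f i (y i)) (iIndepFun_pi fun i => (hf i).aemeasurable)
    fun i => (hf i).comp (measurable_pi_apply i)).trans ?_
  exact Finset.prod_congr rfl fun i _ => (measurePreserving_eval μ i).lintegral_comp (hf i)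

lemma pi_eq_withDensity_prod {ν : (i : ι) → Measure (α i)} [∀ i, SigmaFinite (ν i)]
    {f : (i : ι) → α i → ℝ≥0∞} (hf : ∀ i, Measurable (f i))
    (hν : ∀ i, (μ i).withDensity (f i) = ν i) :
    Measure.pi ν = (Measure.pi μ).withDensity fun y => ∏ i, f i (y i) := by
  refine Measure.pi_eq fun s hs => ?_
  have hind : (Set.univ.pi s).indicator (fun y => ∏ i, f i (y i)) =
      fun y => ∏ i, (s i).indicator (f i) (y i) := by
    funext y
    by_cases hy : y ∈ Set.univ.pi s
    · rw [Set.indicator_of_mem hy]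
      exact Finset.prod_congr rfl fun i _ => (Set.indicator_of_mem (hy i trivial) _).symm
    · rw [Set.indicator_of_notMem hy]
      obtain ⟨i, hi⟩ := not_forall.mp (Set.mem_univ_pi.not.mp hy)
      exact (Finset.prod_eq_zero (Finset.mem_univ i) (Set.indicator_of_notMem hi _)).symm
  rw [withDensity_apply _ (.univ_pi hs), ← lintegral_indicator (.univ_pi hs), hind,
    lintegral_pi_prod fun i => (hf i).indicator (hs i)]
  refine Finset.prod_congr rfl fun i _ => ?_
  rw [lintegral_indicator (hs i), ← withDensity_apply _ (hs i), hν]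

end Pi

end MeasureTheory

lemma sum_mul_div_sum_nonneg {ι : Type*} [Fintype ι] {x y : ι → ℝ} (hx : ∀ i, 0 ≤ x i)
    (hy : ∀ i, 0 ≤ y i) : 0 ≤ ∑ i, x i * (y i / ∑ k, y k) :=
  Finset.sum_nonneg fun i _ =>
    mul_nonneg (hx i) (div_nonneg (hy i) (Finset.sum_nonneg fun k _ => hy k))

lemma tsum_indicator_singleton_mul {α β : Type*} (N : α → β) (F : β → α → ℝ≥0∞) (y : α) :
    ∑' k, ({k} : Set β).indicator 1 (N y) * F k y = F (N y) y := by
  rw [tsum_eq_single (N y) fun k hk => by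
    rw [Set.indicator_of_notMem (Set.mem_singleton_iff.not.mpr hk.symm), zero_mul]]
  simp

namespace ProbabilityTheory

section GammaVector

variable {ι : Type*} [Fintype ι] {θs : ι → ℝ}

noncomputable def gammaPi (θs : ι → ℝ) : Measure (ι → ℝ) :=
  Measure.pi fun i => gammaMeasure (θs i) 1

def ScaleInvariant {β : Type*} (f : (ι → ℝ) → β) : Prop :=
  ∀ c : ℝ, 0 < c → ∀ y, f (c • y) = f y

lemma ae_pos_gammaPi : ∀ᵐ y ∂gammaPi θs, ∀ i, 0 < y i :=
  ae_all_iff.mpr fun i => (Measure.quasiMeasurePreserving_eval _ i).ae ae_pos_gammaMeasure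

lemma map_inv_smul_gammaPi (hθs : ∀ i, 0 < θs i) {r : ℝ} (hr : 0 < r) :
    (gammaPi θs).map (r⁻¹ • ·) = Measure.pi fun i => gammaMeasure (θs i) r := by
  have := fun i => isProbabilityMeasure_gammaMeasure (hθs i) one_pos
  have hmap := Measure.pi_map_pi (μ := fun i => gammaMeasure (θs i) 1) (f := fun _ t => r⁻¹ * t)
    fun i => (measurable_const_mul _).aemeasurable
  simp_rw [map_const_mul_gammaMeasure one_pos (inv_pos.mpr hr), one_div, inv_inv] at hmap
  exact hmap

lemma pi_gammaMeasure_eq_withDensity (hθs : ∀ i, 0 < θs i) {u : ℝ} (hu : -1 < u) :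
    Measure.pi (fun i => gammaMeasure (θs i) (1 + u)) = (gammaPi θs).withDensity fun y =>
      ENNReal.ofReal ((1 + u) ^ ∑ i, θs i) * ENNReal.ofReal (exp (-(u * ∑ i, y i))) := by
  have h1u : 0 < 1 + u := by linarith
  have := fun i => isProbabilityMeasure_gammaMeasure (hθs i) one_pos
  have := fun i => isProbabilityMeasure_gammaMeasure (hθs i) h1u
  rw [gammaPi, pi_eq_withDensity_prod (fun i => by fun_prop)
    fun i => withDensity_exp_gammaMeasure hu]
  congr 1
  funext y
  rw [← ENNReal.ofReal_prod_of_nonneg fun i _ => by positivity,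
    ← ENNReal.ofReal_mul (by positivity), Finset.prod_mul_distrib, rpow_sum_of_pos h1u,
    Finset.mul_sum, ← Finset.sum_neg_distrib, exp_sum]

/-- The scaling `y ↦ (1 + u)⁻¹ • y`, invisible to `h`, maps `gammaPi θs` to the product of the
`Gamma(θᵢ, 1 + u)`, which is `gammaPi θs` tilted by `(1 + u)^θ e^{-u ∑ yᵢ}`. -/
theorem lintegral_mul_exp_neg_mul_sum_gammaPi (hθs : ∀ i, 0 < θs i) {h : (ι → ℝ) → ℝ≥0∞}
    (hh : Measurable h) (hinv : ScaleInvariant h) {u : ℝ} (hu : -1 < u) :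
    ∫⁻ y, h y * ENNReal.ofReal (exp (-(u * ∑ i, y i))) ∂gammaPi θs =
      ENNReal.ofReal ((1 + u) ^ (-∑ i, θs i)) * ∫⁻ y, h y ∂gammaPi θs := by
  have h1u : 0 < 1 + u := by linarith
  have hscale : ∫⁻ y, h y ∂gammaPi θs =
      ∫⁻ y, h y ∂Measure.pi fun i => gammaMeasure (θs i) (1 + u) := by
    rw [← map_inv_smul_gammaPi hθs h1u, lintegral_map hh (measurable_const_smul _)]
    exact lintegral_congr fun y => (hinv _ (inv_pos.mpr h1u) y).symm
  rw [hscale, pi_gammaMeasure_eq_withDensity hθs hu,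
    lintegral_withDensity_eq_lintegral_mul _ (by fun_prop) hh]
  simp_rw [Pi.mul_apply, mul_assoc]
  rw [lintegral_const_mul _ (by fun_prop), ← mul_assoc, ← ENNReal.ofReal_mul (by positivity),
    ← rpow_add h1u, neg_add_cancel, rpow_zero, ENNReal.ofReal_one, one_mul]
  simp_rw [mul_comm]

theorem lintegral_exp_neg_mul_sum_comp_gammaPi (hθs : ∀ i, 0 < θs i) {β : Type*} [Countable β]
    [MeasurableSpace β] [MeasurableSingletonClass β] {N : (ι → ℝ) → β} (hN : Measurable N)
    (hNinv : ScaleInvariant N) {q : β → ℝ} (hq : ∀ k, -1 < q k) :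
    ∫⁻ y, ENNReal.ofReal (exp (-(q (N y) * ∑ i, y i))) ∂gammaPi θs =
      ∫⁻ y, ENNReal.ofReal ((1 + q (N y)) ^ (-∑ i, θs i)) ∂gammaPi θs := by
  set level : β → (ι → ℝ) → ℝ≥0∞ := fun k y => ({k} : Set β).indicator 1 (N y)
  have hlevel : ∀ k, Measurable (level k) := fun k =>
    (measurable_one.indicator (measurableSet_singleton k)).comp hN
  have hlevel_inv : ∀ k, ScaleInvariant (level k) := fun k c hc y => by
    simp only [level, hNinv c hc y]
  simp_rw [← tsum_indicator_singleton_mul N fun k y => ENNReal.ofReal (exp (-(q k * ∑ i, y i))),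
    ← tsum_indicator_singleton_mul N
      fun k (_ : ι → ℝ) => ENNReal.ofReal ((1 + q k) ^ (-∑ i, θs i))]
  rw [lintegral_tsum (f := fun k y => level k y * ENNReal.ofReal (exp (-(q k * ∑ i, y i))))
      fun k => ((hlevel k).mul (by fun_prop)).aemeasurable,
    lintegral_tsum (f := fun k y => level k y * ENNReal.ofReal ((1 + q k) ^ (-∑ i, θs i)))
      fun k => ((hlevel k).mul_const _).aemeasurable]
  refine tsum_congr fun k => ?_
  rw [lintegral_mul_exp_neg_mul_sum_gammaPi hθs (hlevel k) (hlevel_inv k) (hq k),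
    lintegral_mul_const _ (hlevel k), mul_comm]

theorem lintegral_one_add_rpow_eq_lintegral_exp_gammaPi (hθs : ∀ i, 0 < θs i)
    {M : (ι → ℝ) → ℝ} (hM : Measurable M) (hMinv : ScaleInvariant M)
    (hM0 : ∀ᵐ y ∂gammaPi θs, 0 ≤ M y) :
    ∫⁻ y, ENNReal.ofReal ((1 + M y) ^ (-∑ i, θs i)) ∂gammaPi θs =
      ∫⁻ y, ENNReal.ofReal (exp (-(M y * ∑ i, y i))) ∂gammaPi θs := by
  set Q : ℕ → (ι → ℝ) → ℝ := fun n y => ⌊M y * 2 ^ n⌋₊ / 2 ^ n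
  have hQ0 : ∀ n y, 0 ≤ Q n y := fun n y => by positivity
  have hQ : ∀ n, ∫⁻ y, ENNReal.ofReal (exp (-(Q n y * ∑ i, y i))) ∂gammaPi θs =
      ∫⁻ y, ENNReal.ofReal ((1 + Q n y) ^ (-∑ i, θs i)) ∂gammaPi θs := fun n =>
    lintegral_exp_neg_mul_sum_comp_gammaPi hθs (N := fun y => ⌊M y * 2 ^ n⌋₊)
      (q := fun k => k / 2 ^ n) (by fun_prop)
      (fun c hc y => by simp only [hMinv c hc y])
      fun k => by linarith [show (0 : ℝ) ≤ k / 2 ^ n by positivity]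
  have hQlim : ∀ᵐ y ∂gammaPi θs, Tendsto (fun n => Q n y) atTop (𝓝 (M y)) := by
    filter_upwards [hM0] with y hy
    exact (tendsto_nat_floor_mul_div_atTop hy).comp
      (tendsto_pow_atTop_atTop_of_one_lt one_lt_two)
  have hS : ∀ᵐ y ∂gammaPi θs, 0 ≤ ∑ i, y i := by
    filter_upwards [ae_pos_gammaPi] with y hy
    exact Finset.sum_nonneg fun i _ => (hy i).le
  have hθ : 0 ≤ ∑ i, θs i := Finset.sum_nonneg fun i _ => (hθs i).le
  have := fun i => isProbabilityMeasure_gammaMeasure (hθs i) one_pos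
  refine tendsto_nhds_unique (f := fun n =>
    ∫⁻ y, ENNReal.ofReal ((1 + Q n y) ^ (-∑ i, θs i)) ∂gammaPi θs) (l := atTop) ?_ ?_
  · refine tendsto_lintegral_of_dominated_convergence 1 (fun n => by fun_prop)
      (fun n => ae_of_all _ fun y => ?_) (by simp [gammaPi]) ?_
    · exact ENNReal.ofReal_le_one.mpr
        (rpow_le_one_of_one_le_of_nonpos (by linarith [hQ0 n y]) (by linarith))
    · filter_upwards [hQlim, hM0] with y hy hy0
      exact ENNReal.tendsto_ofReal
        ((tendsto_const_nhds.add hy).rpow_const (Or.inl (by linarith)))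
  · simp_rw [← hQ]
    refine tendsto_lintegral_of_dominated_convergence 1 (fun n => by fun_prop)
      (fun n => ?_) (by simp [gammaPi]) ?_
    · filter_upwards [hS] with y hy
      exact ENNReal.ofReal_le_one.mpr
        (exp_le_one_iff.mpr (neg_nonpos.mpr (mul_nonneg (hQ0 n y) hy)))
    · filter_upwards [hQlim] with y hy
      exact ENNReal.tendsto_ofReal ((hy.mul_const _).neg.rexp)

theorem lintegral_one_add_sum_mul_div_rpow_gammaPi (hθs : ∀ i, 0 < θs i) {x : ι → ℝ}
    (hx : ∀ i, 0 ≤ x i) :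
    ∫⁻ y, ENNReal.ofReal ((1 + ∑ i, x i * (y i / ∑ k, y k)) ^ (-∑ i, θs i)) ∂gammaPi θs =
      ∏ i, ENNReal.ofReal ((1 + x i) ^ (-θs i)) := by
  have := fun i => isProbabilityMeasure_gammaMeasure (hθs i) one_pos
  have hpos : ∀ᵐ y ∂gammaPi θs, ∀ i, 0 < y i := ae_pos_gammaPi
  have hinv : ScaleInvariant fun y : ι → ℝ => ∑ i, x i * (y i / ∑ k, y k) := fun c hc y => by
    simp only [Pi.smul_apply, smul_eq_mul, ← Finset.mul_sum, mul_div_mul_left _ _ hc.ne']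
  rw [lintegral_one_add_rpow_eq_lintegral_exp_gammaPi hθs (by fun_prop) hinv
    (hpos.mono fun y hy => sum_mul_div_sum_nonneg hx fun i => (hy i).le)]
  calc ∫⁻ y, ENNReal.ofReal (exp (-((∑ i, x i * (y i / ∑ k, y k)) * ∑ i, y i))) ∂gammaPi θs
      = ∫⁻ y, ∏ i, ENNReal.ofReal (exp (-(x i * y i))) ∂gammaPi θs := by
        refine lintegral_congr_ae (hpos.mono fun y hy => ?_)
        have hS : ∀ i, (∑ k, y k) ≠ 0 := fun i =>
          (Finset.sum_pos (fun k _ => hy k) ⟨i, Finset.mem_univ i⟩).ne'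
        dsimp only
        rw [← ENNReal.ofReal_prod_of_nonneg fun i _ => (exp_pos _).le, ← exp_sum,
          Finset.sum_mul, ← Finset.sum_neg_distrib]
        congr 3 with i
        rw [mul_assoc, div_mul_cancel₀ _ (hS i)]
    _ = ∏ i, ENNReal.ofReal ((1 + x i) ^ (-θs i)) := by
        rw [gammaPi, lintegral_pi_prod (f := fun i t => ENNReal.ofReal (exp (-(x i * t))))
          fun i => by fun_prop]
        exact Finset.prod_congr rfl fun i _ =>
          lintegral_exp_neg_mul_gammaMeasure (hθs i) (by linarith [hx i])

end GammaVector

section IndependentGamma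

variable {Ω : Type*} [MeasurableSpace Ω] {μ : Measure Ω}

theorem integral_one_add_sum_mul_div_rpow_of_iIndepFun {ι : Type*} [Fintype ι] {θs : ι → ℝ}
    (hθs : ∀ i, 0 < θs i) {γs : ι → Ω → ℝ} (hγs : ∀ i, Measurable (γs i))
    (hindep : iIndepFun γs μ) (hlaw : ∀ i, μ.map (γs i) = gammaMeasure (θs i) 1) {x : ι → ℝ}
    (hx : ∀ i, 0 ≤ x i) :
    ∫ ω, (1 + ∑ i, x i * (γs i ω / ∑ k, γs k ω)) ^ (-∑ i, θs i) ∂μ =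
      ∏ i, (1 + x i) ^ (-θs i) := by
  have hvec : Measurable fun ω i => γs i ω := measurable_pi_lambda _ hγs
  have hmap : μ.map (fun ω i => γs i ω) = gammaPi θs := by
    rw [hindep.map_fun_eq_pi_map fun i => (hγs i).aemeasurable, gammaPi]
    simp_rw [hlaw]
  have hfactor : ∀ i, 0 ≤ (1 + x i) ^ (-θs i) := fun i => rpow_nonneg (by linarith [hx i]) _
  have hf : Measurable fun y : ι → ℝ => (1 + ∑ i, x i * (y i / ∑ k, y k)) ^ (-∑ i, θs i) := by
    fun_prop
  rw [← integral_map hvec.aemeasurable hf.aestronglyMeasurable, hmap,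
    integral_eq_lintegral_of_nonneg_ae ?_ hf.aestronglyMeasurable,
    lintegral_one_add_sum_mul_div_rpow_gammaPi hθs hx,
    ← ENNReal.ofReal_prod_of_nonneg fun i _ => hfactor i,
    ENNReal.toReal_ofReal (Finset.prod_nonneg fun i _ => hfactor i)]
  filter_upwards [ae_pos_gammaPi] with y hy
  exact rpow_nonneg (by linarith [sum_mul_div_sum_nonneg hx fun i => (hy i).le]) _

variable [IsProbabilityMeasure μ]

theorem integral_exp_neg_mul_of_indepFun {a : ℝ} (ha : 0 < a) {γ Z : Ω → ℝ} (hγ : Measurable γ)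
    (hZ : Measurable Z) (hγlaw : μ.map γ = gammaMeasure a 1) (hindep : IndepFun γ Z μ)
    (hZ1 : ∀ᵐ ω ∂μ, -1 < Z ω) :
    ∫ ω, exp (-(γ ω * Z ω)) ∂μ = ∫ ω, (1 + Z ω) ^ (-a) ∂μ := by
  have := isProbabilityMeasure_gammaMeasure ha one_pos
  have hjoint := (indepFun_iff_map_prod_eq_prod_map_map hγ.aemeasurable hZ.aemeasurable).mp hindep
  rw [hγlaw] at hjoint
  rw [integral_eq_lintegral_of_nonneg_ae (ae_of_all _ fun ω => (exp_pos _).le) (by fun_prop),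
    integral_eq_lintegral_of_nonneg_ae (hZ1.mono fun ω h => rpow_nonneg (by linarith) _)
      (by fun_prop : Measurable fun ω => (1 + Z ω) ^ (-a)).aestronglyMeasurable]
  congr 1
  calc ∫⁻ ω, ENNReal.ofReal (exp (-(γ ω * Z ω))) ∂μ
      = ∫⁻ p, ENNReal.ofReal (exp (-(p.1 * p.2))) ∂(μ.map fun ω => (γ ω, Z ω)) :=
        (lintegral_map (f := fun p : ℝ × ℝ => ENNReal.ofReal (exp (-(p.1 * p.2)))) (by fun_prop)
          (hγ.prodMk hZ)).symm
    _ = ∫⁻ z, ∫⁻ s, ENNReal.ofReal (exp (-(s * z))) ∂gammaMeasure a 1 ∂μ.map Z := by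
        rw [hjoint, lintegral_prod_symm _ (by fun_prop)]
    _ = ∫⁻ z, ENNReal.ofReal ((1 + z) ^ (-a)) ∂μ.map Z := by
        refine lintegral_congr_ae ?_
        filter_upwards [(ae_map_iff hZ.aemeasurable measurableSet_Ioi).mpr hZ1] with z hz
        simp_rw [mul_comm _ z]
        exact lintegral_exp_neg_mul_gammaMeasure ha hz
    _ = ∫⁻ ω, ENNReal.ofReal ((1 + Z ω) ^ (-a)) ∂μ :=
        lintegral_map (f := fun z => ENNReal.ofReal ((1 + z) ^ (-a))) (by fun_prop) hZ

end IndependentGamma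

end ProbabilityTheory

/-- Von Neumann–Watson transform of a finite Dirichlet mean: for
`(P_1,…,P_m) ~ Dirichlet(θ_1,…,θ_m)` (normalized independent gamma variables), fixed
nonnegative `x_1,…,x_m` and `λ ≥ 0`,
`E[(1 + λ ∑ x_i P_i)^{-θ}] = ∏ (1 + λ x_i)^{-θ_i}`, and for `γ ~ Gamma(θ)` independent of
`(P_1,…,P_m)`, `E[exp(-λ γ ∑ x_i P_i)]` equals the same product. -/
theorem stmt14 {Ω : Type*} [MeasurableSpace Ω] (μ : Measure Ω) [IsProbabilityMeasure μ]
    (m : ℕ) (hm : 1 ≤ m) (θs : Fin m → ℝ) (hθs : ∀ i, 0 < θs i)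
    (θ : ℝ) (hθ : θ = ∑ i, θs i)
    (γs : Fin m → Ω → ℝ) (hγsmeas : ∀ i, Measurable (γs i))
    (hγsindep : iIndepFun γs μ)
    (hγslaw : ∀ i, Measure.map (γs i) μ = gammaMeasure (θs i) 1)
    (P : Fin m → Ω → ℝ) (hP : ∀ i ω, P i ω = γs i ω / ∑ k, γs k ω)
    (γ : Ω → ℝ) (hγmeas : Measurable γ)
    (hγlaw : Measure.map γ μ = gammaMeasure θ 1)
    (hγindep : IndepFun γ (fun ω => fun i => P i ω) μ)
    (x : Fin m → ℝ) (hx : ∀ i, 0 ≤ x i) (l : ℝ) (hl : 0 ≤ l) :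
    ∫ ω, (1 + l * ∑ i, x i * P i ω) ^ (-θ) ∂μ = ∏ i, (1 + l * x i) ^ (-(θs i)) ∧
    ∫ ω, Real.exp (-(l * γ ω * ∑ i, x i * P i ω)) ∂μ =
      ∏ i, (1 + l * x i) ^ (-(θs i)) := by
  have hθ0 : 0 < θ := hθ ▸ Finset.sum_pos (fun i _ => hθs i) ⟨⟨0, hm⟩, Finset.mem_univ _⟩
  have hPm : ∀ i, Measurable (P i) := fun i => by
    rw [show P i = _ from funext (hP i)]
    fun_prop
  have hγspos : ∀ᵐ ω ∂μ, ∀ i, 0 < γs i ω := ae_all_iff.mpr fun i =>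
    ae_of_ae_map (hγsmeas i).aemeasurable ((hγslaw i).symm ▸ ae_pos_gammaMeasure)
  have hmoment : ∫ ω, (1 + l * ∑ i, x i * P i ω) ^ (-θ) ∂μ = ∏ i, (1 + l * x i) ^ (-(θs i)) := by
    simp_rw [Finset.mul_sum, ← mul_assoc, hP, hθ]
    exact integral_one_add_sum_mul_div_rpow_of_iIndepFun hθs hγsmeas hγsindep hγslaw
      fun i => mul_nonneg hl (hx i)
  have hexp : ∀ ω, l * γ ω * ∑ i, x i * P i ω = γ ω * (l * ∑ i, x i * P i ω) := fun ω => by ring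
  refine ⟨hmoment, ?_⟩
  simp_rw [hexp]
  rw [integral_exp_neg_mul_of_indepFun (Z := fun ω => l * ∑ i, x i * P i ω) hθ0 hγmeas
    (by fun_prop) hγlaw
    (hγindep.comp measurable_id (by fun_prop : Measurable fun p : Fin m → ℝ => l * ∑ i, x i * p i))
    (hγspos.mono fun ω h => ?_), hmoment]
  simp only [hP]
  linarith [mul_nonneg hl (sum_mul_div_sum_nonneg hx fun i => (h i).le)]
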